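/- Let n ≥ 1, let B ⊆ Fin n, let a : Fin n → Fin n → ℝ be a measurement matrix, and let f : Fin n → ℝ. Suppose v : Fin n → ℝ minimizes I(u) over all u with u_i = f_i on B, and suppose b is dual feasible and attains the maximum of ∑_{i ∈ B} (div b')_i · f_i over all dual feasible b'. Then for all i, j: if v_i ≠ v_j then |b_{ij}| = a_{ij}/2, and b_{ij}·(v_i − v_j) ≤ 0 (equivalently, the current J := −2b satisfies |J_{ij}| = a_{ij} whenever v_i ≠ v_j and J_{ij}·(v_i − v_j) ≥ 0 for all i, j). (Complementary slackness for the Dirichlet problem.) -/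
import Mathlib

/-- Weighted ℓ¹ energy `I(u) = (1/2) ∑_{i,j} a_{ij} |u_i - u_j|`. -/
noncomputable def lgEnergy {n : ℕ} (a : Fin n → Fin n → ℝ) (u : Fin n → ℝ) : ℝ :=
  (1 / 2) * ∑ i, ∑ j, a i j * |u i - u j|

/-- Divergence of a matrix: `(div b)_i = ∑_j (b_{ji} - b_{ij})`. -/
noncomputable def dvg {n : ℕ} (b : Fin n → Fin n → ℝ) (i : Fin n) : ℝ :=
  ∑ j, (b j i - b i j)

section Aux
variable {n : ℕ}

lemma lgEnergy_nonneg (a : Fin n → Fin n → ℝ) (ha : ∀ i j, 0 ≤ a i j) (u : Fin n → ℝ) :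
    0 ≤ lgEnergy a u := by
  unfold lgEnergy
  have : ∀ i ∈ Finset.univ, (0:ℝ) ≤ ∑ j, a i j * |u i - u j| := fun i _ =>
    Finset.sum_nonneg fun j _ => mul_nonneg (ha i j) (abs_nonneg _)
  nlinarith [Finset.sum_nonneg this]

lemma lgEnergy_add_le (a : Fin n → Fin n → ℝ) (ha : ∀ i j, 0 ≤ a i j) (u w : Fin n → ℝ) :
    lgEnergy a (u + w) ≤ lgEnergy a u + lgEnergy a w := by
  unfold lgEnergy
  rw [← mul_add, ← Finset.sum_add_distrib]
  have : ∀ i ∈ (Finset.univ : Finset (Fin n)),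
      ∑ j, a i j * |(u + w) i - (u + w) j| ≤
      (∑ j, a i j * |u i - u j| + ∑ j, a i j * |w i - w j|) := by
    intro i _
    rw [← Finset.sum_add_distrib]
    refine Finset.sum_le_sum fun j _ => ?_
    rw [← mul_add]
    refine mul_le_mul_of_nonneg_left ?_ (ha i j)
    have : (u + w) i - (u + w) j = (u i - u j) + (w i - w j) := by simp; ring
    rw [this]; exact abs_add_le _ _
  have h := Finset.sum_le_sum this
  linarith

lemma lgEnergy_smul (a : Fin n → Fin n → ℝ) {c : ℝ} (hc : 0 ≤ c) (u : Fin n → ℝ) :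
    lgEnergy a (c • u) = c * lgEnergy a u := by
  unfold lgEnergy
  have : ∀ i j : Fin n, a i j * |(c • u) i - (c • u) j| = c * (a i j * |u i - u j|) := by
    intro i j
    have h : (c • u) i - (c • u) j = c * (u i - u j) := by simp; ring
    rw [h, abs_mul, abs_of_nonneg hc]; ring
  simp only [this, ← Finset.mul_sum]
  ring

lemma lgEnergy_le_norm (a : Fin n → Fin n → ℝ) (ha : ∀ i j, 0 ≤ a i j) (w : Fin n → ℝ) :
    lgEnergy a w ≤ (∑ i, ∑ j, a i j) * ‖w‖ := by
  unfold lgEnergy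
  rw [Finset.sum_mul]
  have h : ∀ i ∈ (Finset.univ : Finset (Fin n)),
      ∑ j, a i j * |w i - w j| ≤ (∑ j, a i j) * (2 * ‖w‖) := by
    intro i _
    rw [Finset.sum_mul]
    refine Finset.sum_le_sum fun j _ => ?_
    refine mul_le_mul_of_nonneg_left ?_ (ha i j)
    have h1 : |w i| ≤ ‖w‖ := by
      have := norm_le_pi_norm w i
      simpa using this
    have h2 : |w j| ≤ ‖w‖ := by
      have := norm_le_pi_norm w j
      simpa using this
    calc |w i - w j| ≤ |w i| + |w j| := abs_sub _ _
      _ ≤ 2 * ‖w‖ := by linarith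
  have := Finset.sum_le_sum h
  have h2 : ∑ i, (∑ j, a i j) * (2 * ‖w‖) = (∑ i, (∑ j, a i j) * ‖w‖) * 2 := by
    rw [Finset.sum_mul]
    exact Finset.sum_congr rfl fun i _ => by ring
  rw [h2] at this
  linarith

lemma dvg_pairing (b : Fin n → Fin n → ℝ) (w : Fin n → ℝ) :
    ∑ i, dvg b i * w i = ∑ i, ∑ j, b i j * (w j - w i) := by
  unfold dvg
  have h1 : ∑ i, (∑ j, (b j i - b i j)) * w i
      = ∑ i, ∑ j, (b j i * w i - b i j * w i) := by
    refine Finset.sum_congr rfl fun i _ => ?_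
    rw [Finset.sum_mul]
    exact Finset.sum_congr rfl fun j _ => by ring
  rw [h1]
  have h2 : ∑ i, ∑ j, (b j i * w i) = ∑ i, ∑ j, (b i j * w j) := by
    rw [Finset.sum_comm]
  have h3 : ∑ i, ∑ j, b i j * (w j - w i) = ∑ i, ∑ j, (b i j * w j - b i j * w i) := by
    refine Finset.sum_congr rfl fun i _ => Finset.sum_congr rfl fun j _ => by ring
  simp only [Finset.sum_sub_distrib] at *
  rw [h2, h3]

end Aux
section Aux2
variable {n : ℕ}

variable {n : ℕ}

lemma clm_pi_repr (φ : (Fin n → ℝ) →L[ℝ] ℝ) (y : Fin n → ℝ) :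
    φ y = ∑ i, y i * φ (fun j => if i = j then 1 else 0) := by
  conv_lhs => rw [pi_eq_sum_univ y]
  rw [map_sum]
  exact Finset.sum_congr rfl fun i _ => by rw [map_smul]; simp [smul_eq_mul]

lemma rsign_mul_self (x : ℝ) : Real.sign x * x = |x| := by
  rcases lt_trichotomy x 0 with h | h | h
  · rw [Real.sign_of_neg h, abs_of_neg h]; ring
  · simp [h]
  · rw [Real.sign_of_pos h, abs_of_pos h]; ring

lemma abs_sign_le (x : ℝ) : |Real.sign x| ≤ 1 := by
  rcases lt_trichotomy x 0 with h | h | h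
  · rw [Real.sign_of_neg h]; norm_num
  · simp [h]
  · rw [Real.sign_of_pos h]; norm_num

noncomputable def DVG (n : ℕ) : (Fin n → Fin n → ℝ) →ₗ[ℝ] (Fin n → ℝ) where
  toFun := dvg
  map_add' m m' := by
    funext i
    show ∑ j, ((m + m') j i - (m + m') i j) = (∑ j, (m j i - m i j)) + ∑ j, (m' j i - m' i j)
    rw [← Finset.sum_add_distrib]
    exact Finset.sum_congr rfl fun j _ => by simp only [Pi.add_apply]; ring
  map_smul' c m := by
    funext i
    show ∑ j, ((c • m) j i - (c • m) i j) = c * ∑ j, (m j i - m i j)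
    simp only [RingHom.id_apply, Pi.smul_apply, smul_eq_mul, Finset.mul_sum]
    exact Finset.sum_congr rfl fun j _ => by ring

lemma box_compact (a : Fin n → Fin n → ℝ) :
    IsCompact {m : Fin n → Fin n → ℝ | ∀ i j, |m i j| ≤ a i j / 2} := by
  have : {m : Fin n → Fin n → ℝ | ∀ i j, |m i j| ≤ a i j / 2}
      = Set.univ.pi fun i => Set.univ.pi fun j => Set.Icc (-(a i j / 2)) (a i j / 2) := by
    ext m; simp only [Set.mem_setOf_eq, Set.mem_pi, Set.mem_univ, true_implies, Set.mem_Icc, abs_le]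
  rw [this]
  exact isCompact_univ_pi fun i => isCompact_univ_pi fun j => isCompact_Icc

lemma box_convex (a : Fin n → Fin n → ℝ) :
    Convex ℝ {m : Fin n → Fin n → ℝ | ∀ i j, |m i j| ≤ a i j / 2} := by
  have : {m : Fin n → Fin n → ℝ | ∀ i j, |m i j| ≤ a i j / 2}
      = Set.univ.pi fun i => Set.univ.pi fun j => Set.Icc (-(a i j / 2)) (a i j / 2) := by
    ext m; simp only [Set.mem_setOf_eq, Set.mem_pi, Set.mem_univ, true_implies, Set.mem_Icc, abs_le]
  rw [this]
  exact convex_pi fun i _ => convex_pi fun j _ => convex_Icc _ _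

end Aux2


lemma strong_duality {n : ℕ} (B : Finset (Fin n)) (a : Fin n → Fin n → ℝ)
    (hanonneg : ∀ i j, 0 ≤ a i j)
    (f v : Fin n → ℝ) (hvB : ∀ i ∈ B, v i = f i)
    (hvmin : ∀ u : Fin n → ℝ, (∀ i ∈ B, u i = f i) → lgEnergy a v ≤ lgEnergy a u) :
    ∃ b' : Fin n → Fin n → ℝ, (∀ i j, |b' i j| ≤ a i j / 2) ∧ (∀ i, i ∉ B → dvg b' i = 0) ∧
      lgEnergy a v ≤ ∑ i ∈ B, dvg b' i * f i := by
  classical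
  set A : ℝ := ∑ i, ∑ j, a i j with hA
  have hA0 : 0 ≤ A := Finset.sum_nonneg fun i _ => Finset.sum_nonneg fun j _ => hanonneg i j
  set p : (Fin n → ℝ) → ℝ :=
    fun y => sInf (lgEnergy a '' {u | ∀ i ∈ B, u i = f i + y i}) with hp
  have hne : ∀ y : Fin n → ℝ, (lgEnergy a '' {u | ∀ i ∈ B, u i = f i + y i}).Nonempty :=
    fun y => ⟨lgEnergy a (f + y), ⟨f + y, fun i _ => by simp, rfl⟩⟩
  have hbdd : ∀ y : Fin n → ℝ, BddBelow (lgEnergy a '' {u | ∀ i ∈ B, u i = f i + y i}) := by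
    rintro y
    refine ⟨0, ?_⟩
    rintro t ⟨u, _, rfl⟩
    exact lgEnergy_nonneg a hanonneg u
  have hple : ∀ (y : Fin n → ℝ) (u : Fin n → ℝ), (∀ i ∈ B, u i = f i + y i) →
      p y ≤ lgEnergy a u := fun y u hu => csInf_le (hbdd y) ⟨u, hu, rfl⟩
  have hplt : ∀ (y : Fin n → ℝ) (t : ℝ), p y < t →
      ∃ u : Fin n → ℝ, (∀ i ∈ B, u i = f i + y i) ∧ lgEnergy a u < t := by
    intro y t ht
    obtain ⟨x, ⟨u, hu, rfl⟩, hx⟩ := exists_lt_of_csInf_lt (hne y) ht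
    exact ⟨u, hu, hx⟩
  have hp0 : p 0 = lgEnergy a v := by
    refine le_antisymm (hple 0 v fun i hi => by simpa using hvB i hi) ?_
    refine le_csInf (hne 0) ?_
    rintro t ⟨u, hu, rfl⟩
    exact hvmin u fun i hi => by simpa using hu i hi
  have hlip : ∀ y y' : Fin n → ℝ, p y' ≤ p y + A * ‖y' - y‖ := by
    intro y y'
    refine le_of_forall_pos_le_add ?_
    intro δ hδ
    obtain ⟨u, hu, hIu⟩ := hplt y (p y + δ) (by linarith [lt_add_of_pos_right (p y) hδ])
    have hmem : ∀ i ∈ B, (u + (y' - y)) i = f i + y' i := by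
      intro i hi
      have := hu i hi
      simp only [Pi.add_apply, Pi.sub_apply, this]
      ring
    calc p y' ≤ lgEnergy a (u + (y' - y)) := hple y' _ hmem
      _ ≤ lgEnergy a u + lgEnergy a (y' - y) := lgEnergy_add_le a hanonneg _ _
      _ ≤ lgEnergy a u + A * ‖y' - y‖ := by linarith [lgEnergy_le_norm a hanonneg (y' - y)]
      _ ≤ (p y + A * ‖y' - y‖) + δ := by linarith
  -- the strict epigraph of p
  set S : Set ((Fin n → ℝ) × ℝ) := {z | p z.1 < z.2} with hS
  have hSopen : IsOpen S := by
    rw [Metric.isOpen_iff]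
    intro z hz
    have hgap : 0 < z.2 - p z.1 := by simpa [hS, sub_pos] using hz
    refine ⟨(z.2 - p z.1) / (2 * (A + 1)), by positivity, ?_⟩
    intro z' hz'
    rw [Metric.mem_ball, Prod.dist_eq] at hz'
    have h1 : dist z'.1 z.1 < (z.2 - p z.1) / (2 * (A + 1)) :=
      lt_of_le_of_lt (le_max_left _ _) hz'
    have h2 : dist z'.2 z.2 < (z.2 - p z.1) / (2 * (A + 1)) :=
      lt_of_le_of_lt (le_max_right _ _) hz'
    have hd2 : |z'.2 - z.2| < (z.2 - p z.1) / (2 * (A + 1)) := by rwa [Real.dist_eq] at h2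
    have hn : ‖z'.1 - z.1‖ < (z.2 - p z.1) / (2 * (A + 1)) := by
      rwa [dist_eq_norm] at h1
    have hlp := hlip z.1 z'.1
    have habs := abs_lt.1 hd2
    show p z'.1 < z'.2
    have hA1 : (0:ℝ) < A + 1 := by linarith
    have hmul : A * ‖z'.1 - z.1‖ ≤ (A + 1) * ((z.2 - p z.1) / (2 * (A + 1))) := by
      have := mul_le_mul_of_nonneg_left hn.le hA0
      nlinarith [norm_nonneg (z'.1 - z.1)]
    have hq : (A + 1) * ((z.2 - p z.1) / (2 * (A + 1))) = (z.2 - p z.1) / 2 := by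
      field_simp
    rw [hq] at hmul
    nlinarith
  have hSconv : Convex ℝ S := by
    rintro z1 hz1 z2 hz2 lam mu hlam hmu hlm
    rcases eq_or_lt_of_le hlam with h0 | hlam
    · have : mu = 1 := by linarith
      simpa [← h0, this] using hz2
    rcases eq_or_lt_of_le hmu with h0 | hmu
    · have : lam = 1 := by linarith
      simpa [← h0, this] using hz1
    obtain ⟨u1, hu1, hI1⟩ := hplt z1.1 z1.2 hz1
    obtain ⟨u2, hu2, hI2⟩ := hplt z2.1 z2.2 hz2
    show p (lam • z1 + mu • z2).1 < (lam • z1 + mu • z2).2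
    have hfst : (lam • z1 + mu • z2).1 = lam • z1.1 + mu • z2.1 := rfl
    have hsnd : (lam • z1 + mu • z2).2 = lam * z1.2 + mu * z2.2 := rfl
    rw [hfst, hsnd]
    have hmem : ∀ i ∈ B, (lam • u1 + mu • u2) i = f i + (lam • z1.1 + mu • z2.1) i := by
      intro i hi
      have e1 := hu1 i hi
      have e2 := hu2 i hi
      simp only [Pi.add_apply, Pi.smul_apply, smul_eq_mul, e1, e2]
      linear_combination (f i) * hlm
    have hle := hple _ _ hmem
    have hsub : lgEnergy a (lam • u1 + mu • u2) ≤
        lam * lgEnergy a u1 + mu * lgEnergy a u2 := by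
      calc lgEnergy a (lam • u1 + mu • u2)
          ≤ lgEnergy a (lam • u1) + lgEnergy a (mu • u2) := lgEnergy_add_le a hanonneg _ _
        _ = lam * lgEnergy a u1 + mu * lgEnergy a u2 := by
            rw [lgEnergy_smul a hlam.le, lgEnergy_smul a hmu.le]
    have : lam * lgEnergy a u1 + mu * lgEnergy a u2 < lam * z1.2 + mu * z2.2 := by
      have := mul_lt_mul_of_pos_left hI1 hlam
      have := mul_lt_mul_of_pos_left hI2 hmu
      linarith
    linarith
  have hnotin : ((0 : Fin n → ℝ), p 0) ∉ S := by
    simp [hS]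
  obtain ⟨φ, hφ⟩ := geometric_hahn_banach_open_point hSconv hSopen hnotin
  -- decompose φ
  set c : ℝ := φ ((0 : Fin n → ℝ), (1 : ℝ)) with hc
  have hdecomp : ∀ (y : Fin n → ℝ) (t : ℝ), φ (y, t) = φ (y, (0:ℝ)) + t * c := by
    intro y t
    have : (y, t) = (y, (0:ℝ)) + t • ((0 : Fin n → ℝ), (1:ℝ)) := by
      simp [Prod.ext_iff]
    rw [this, map_add, map_smul, smul_eq_mul]
  have h00 : φ ((0 : Fin n → ℝ), (0:ℝ)) = 0 := by
    have he : ((0 : Fin n → ℝ), (0:ℝ)) = (0 : (Fin n → ℝ) × ℝ) := rfl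
    rw [he, map_zero]
  have hphi0 : φ ((0 : Fin n → ℝ), p 0) = p 0 * c := by
    rw [hdecomp, h00]; ring
  have key : ∀ (y : Fin n → ℝ) (t : ℝ), p y < t → φ (y, (0:ℝ)) + t * c < p 0 * c := by
    intro y t ht
    have := hφ (y, t) ht
    rwa [hdecomp, hphi0] at this
  have hcneg : c < 0 := by
    have := key 0 (p 0 + 1) (by linarith)
    rw [h00] at this
    nlinarith
  have hsub : ∀ y : Fin n → ℝ, φ (y, (0:ℝ)) + p y * c ≤ p 0 * c := by
    intro y
    by_contra hcon
    push_neg at hcon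
    set δ : ℝ := φ (y, (0:ℝ)) + p y * c - p 0 * c with hδ
    have hδ0 : 0 < δ := by linarith
    have hε : 0 < δ / (-c) / 2 := div_pos (div_pos hδ0 (by linarith)) two_pos
    have := key y (p y + δ / (-c) / 2) (by linarith)
    have hcne : c ≠ 0 := ne_of_lt hcneg
    have hq2 : δ / (-c) / 2 * c = -(δ / 2) := by
      field_simp
    have hexp : (p y + δ / (-c) / 2) * c = p y * c - δ / 2 := by
      rw [add_mul, hq2]; ring
    rw [hexp] at this
    linarith
  -- the subgradient s
  set ψ : (Fin n → ℝ) →L[ℝ] ℝ := φ.comp (ContinuousLinearMap.inl ℝ (Fin n → ℝ) ℝ) with hψ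
  have hψa : ∀ y : Fin n → ℝ, ψ y = φ (y, (0:ℝ)) := fun y => rfl
  set s : Fin n → ℝ := fun i => ψ (fun j => if i = j then 1 else 0) / (-c) with hsdef
  have hsum : ∀ y : Fin n → ℝ, ∑ i, s i * y i = φ (y, (0:ℝ)) / (-c) := by
    intro y
    rw [← hψa, clm_pi_repr ψ y, Finset.sum_div]
    exact Finset.sum_congr rfl fun i _ => by rw [hsdef]; ring
  have hsubgrad : ∀ y : Fin n → ℝ, p 0 + ∑ i, s i * y i ≤ p y := by
    intro y
    have h1 := hsub y
    have h2 : φ (y, (0:ℝ)) ≤ (p 0 - p y) * c := by linarith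
    rw [hsum y]
    have h3 : φ (y, (0:ℝ)) / (-c) ≤ p y - p 0 := by
      rw [div_le_iff₀ (by linarith : (0:ℝ) < -c)]
      nlinarith
    linarith
  have hsoffB : ∀ i, i ∉ B → s i = 0 := by
    intro i hi
    have hpeq : ∀ r : ℝ, p (fun j => if i = j then r else 0) = p 0 := by
      intro r
      have hni : ∀ k, k ∈ B → (if i = k then r else (0:ℝ)) = 0 := by
        intro k hk
        rw [if_neg]
        intro he; exact hi (he ▸ hk)
      have hset : {u : Fin n → ℝ | ∀ k ∈ B, u k = f k + (fun j => if i = j then r else 0) k}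
          = {u : Fin n → ℝ | ∀ k ∈ B, u k = f k + (0 : Fin n → ℝ) k} := by
        ext u
        simp only [Set.mem_setOf_eq, Pi.zero_apply, add_zero]
        constructor
        · intro h k hk
          have := h k hk
          rwa [hni k hk, add_zero] at this
        · intro h k hk
          rw [hni k hk, add_zero]
          exact h k hk
      show sInf _ = sInf _
      rw [hset]
    have hr : ∀ r : ℝ, p 0 + s i * r ≤ p 0 := by
      intro r
      have h := hsubgrad (fun j => if i = j then r else 0)
      rw [hpeq r] at h
      have hsum2 : ∑ k, s k * (fun j => if i = j then r else 0) k = s i * r := by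
        have : ∀ k ∈ (Finset.univ : Finset (Fin n)),
            s k * (fun j => if i = j then r else 0) k = if i = k then s k * r else 0 := by
          intro k _
          by_cases hik : i = k <;> simp [hik]
        rw [Finset.sum_congr rfl this, Finset.sum_ite_eq]
        simp
      rwa [hsum2] at h
    have h1 := hr 1
    have h2 := hr (-1)
    have hs1 : s i ≤ 0 := by linarith
    have hs2 : 0 ≤ s i := by linarith
    linarith
  -- basic consequences of the subgradient inequality
  have hkey : ∀ u : Fin n → ℝ,
      lgEnergy a v + ∑ i, s i * (u i - f i) ≤ lgEnergy a u := by
    intro u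
    have h1 := hsubgrad (u - f)
    have h2 : p (u - f) ≤ lgEnergy a u := by
      refine hple (u - f) u fun i _ => ?_
      simp
    have h3 : ∑ i, s i * (u - f) i = ∑ i, s i * (u i - f i) :=
      Finset.sum_congr rfl fun i _ => by simp
    rw [h3] at h1
    rw [← hp0]
    linarith
  have hsf : lgEnergy a v ≤ ∑ i, s i * f i := by
    have := hkey 0
    have h0 : lgEnergy a (0 : Fin n → ℝ) = 0 := by
      unfold lgEnergy
      simp
    have h1 : ∑ i, s i * ((0:Fin n → ℝ) i - f i) = -∑ i, s i * f i := by
      rw [← Finset.sum_neg_distrib]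
      exact Finset.sum_congr rfl fun i _ => by simp
    rw [h0, h1] at this
    linarith
  have hlin : ∀ u : Fin n → ℝ, ∑ i, s i * u i ≤ lgEnergy a u := by
    intro u
    by_contra hcon
    push_neg at hcon
    set ε : ℝ := ∑ i, s i * u i - lgEnergy a u with hε
    have hε0 : 0 < ε := by linarith
    set lam : ℝ := (|lgEnergy a v| + |∑ i, s i * f i| + 1) / ε with hlam
    have hlam0 : 0 < lam := by positivity
    have h1 := hkey (lam • u)
    have h2 : lgEnergy a (lam • u) = lam * lgEnergy a u := lgEnergy_smul a hlam0.le u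
    have h3 : ∑ i, s i * ((lam • u) i - f i) = lam * (∑ i, s i * u i) - ∑ i, s i * f i := by
      rw [Finset.mul_sum, ← Finset.sum_sub_distrib]
      exact Finset.sum_congr rfl fun i _ => by simp; ring
    rw [h2, h3] at h1
    have h4 : lam * ε = |lgEnergy a v| + |∑ i, s i * f i| + 1 := by
      rw [hlam]
      field_simp
    have h5 : lgEnergy a v - ∑ i, s i * f i ≤ lam * lgEnergy a u - lam * ∑ i, s i * u i := by
      linarith
    have h6 : lam * lgEnergy a u - lam * ∑ i, s i * u i = -(lam * ε) := by
      rw [hε]; ring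
    rw [h6, h4] at h5
    have h7 : -|lgEnergy a v| ≤ lgEnergy a v := neg_abs_le _
    have h8 : -|∑ i, s i * f i| ≤ -(∑ i, s i * f i) := by
      have := le_abs_self (∑ i, s i * f i)
      linarith
    linarith
  -- the set of feasible divergences
  set C : Set (Fin n → ℝ) := (DVG n) '' {m : Fin n → Fin n → ℝ | ∀ i j, |m i j| ≤ a i j / 2}
    with hC
  have hCconv : Convex ℝ C := (box_convex a).linear_image (DVG n)
  have hCcomp : IsCompact C := (box_compact a).image (DVG n).continuous_of_finiteDimensional
  have hCclosed : IsClosed C := hCcomp.isClosed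
  have hsC : s ∈ C := by
    by_contra hs
    obtain ⟨ψ₂, r, hCr, hr⟩ := geometric_hahn_banach_closed_point hCconv hCclosed hs
    set w : Fin n → ℝ := fun i => ψ₂ (fun j => if i = j then 1 else 0) with hw
    have hrepr : ∀ x : Fin n → ℝ, ψ₂ x = ∑ i, x i * w i := fun x => clm_pi_repr ψ₂ x
    set b' : Fin n → Fin n → ℝ := fun i j => (a i j / 2) * Real.sign (w j - w i) with hb'
    have hb'box : b' ∈ {m : Fin n → Fin n → ℝ | ∀ i j, |m i j| ≤ a i j / 2} := by
      intro i j
      show |a i j / 2 * Real.sign (w j - w i)| ≤ a i j / 2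
      rw [abs_mul, abs_of_nonneg (show (0:ℝ) ≤ a i j / 2 by linarith [hanonneg i j])]
      calc a i j / 2 * |Real.sign (w j - w i)| ≤ a i j / 2 * 1 :=
            mul_le_mul_of_nonneg_left (abs_sign_le _) (by linarith [hanonneg i j])
        _ = a i j / 2 := mul_one _
    have hval : ψ₂ (DVG n b') = lgEnergy a w := by
      rw [hrepr]
      have h1 : ∀ i, (DVG n b') i = dvg b' i := fun i => rfl
      have h2 : ∑ i, (DVG n b') i * w i = ∑ i, dvg b' i * w i := rfl
      rw [h2, dvg_pairing]
      unfold lgEnergy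
      rw [Finset.mul_sum]
      refine Finset.sum_congr rfl fun i _ => ?_
      rw [Finset.mul_sum]
      refine Finset.sum_congr rfl fun j _ => ?_
      show a i j / 2 * Real.sign (w j - w i) * (w j - w i) = 1/2 * (a i j * |w i - w j|)
      rw [mul_assoc, rsign_mul_self, abs_sub_comm (w j) (w i)]
      ring
    have hlt : ψ₂ (DVG n b') < r := hCr _ ⟨b', hb'box, rfl⟩
    have hgt : r < ψ₂ s := hr
    have hsw : ψ₂ s = ∑ i, s i * w i := by
      rw [hrepr]
    have := hlin w
    rw [hval] at hlt
    rw [hsw] at hgt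
    linarith
  obtain ⟨bstar, hbstarbox, hbstar⟩ := hsC
  refine ⟨bstar, hbstarbox, ?_, ?_⟩
  · intro i hi
    have : dvg bstar i = s i := by rw [← hbstar]; rfl
    rw [this]
    exact hsoffB i hi
  · have hdv : ∀ i, dvg bstar i = s i := fun i => by rw [← hbstar]; rfl
    have h1 : ∑ i ∈ B, dvg bstar i * f i = ∑ i ∈ B, s i * f i :=
      Finset.sum_congr rfl fun i _ => by rw [hdv]
    have h2 : ∑ i, s i * f i = ∑ i ∈ B, s i * f i := by
      refine (Finset.sum_subset B.subset_univ ?_).symm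
      intro i _ hi
      rw [hsoffB i hi, zero_mul]
    rw [h1, ← h2]
    exact hsf


/-- Complementary slackness for the Dirichlet problem: a primal minimizer `v` and a
dual optimal `b` satisfy `|b_{ij}| = a_{ij}/2` wherever `v_i ≠ v_j`, and
`b_{ij}(v_i - v_j) ≤ 0` everywhere. -/
theorem dirichlet_complementary_slackness
    (n : ℕ) (hn : 1 ≤ n) (B : Finset (Fin n))
    (a : Fin n → Fin n → ℝ)
    (hasymm : ∀ i j, a i j = a j i) (hanonneg : ∀ i j, 0 ≤ a i j)
    (hadiag : ∀ i, a i i = 0)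
    (f : Fin n → ℝ) (v : Fin n → ℝ)
    (hvB : ∀ i ∈ B, v i = f i)
    (hvmin : ∀ u : Fin n → ℝ, (∀ i ∈ B, u i = f i) → lgEnergy a v ≤ lgEnergy a u)
    (b : Fin n → Fin n → ℝ)
    (hb1 : ∀ i j, |b i j| ≤ a i j / 2)
    (hb2 : ∀ i, i ∉ B → dvg b i = 0)
    (hbmax : ∀ b' : Fin n → Fin n → ℝ,
      (∀ i j, |b' i j| ≤ a i j / 2) → (∀ i, i ∉ B → dvg b' i = 0) →
      ∑ i ∈ B, dvg b' i * f i ≤ ∑ i ∈ B, dvg b i * f i) :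
    ∀ i j, (v i ≠ v j → |b i j| = a i j / 2) ∧ b i j * (v i - v j) ≤ 0 := by
  classical
  obtain ⟨b', hb'1, hb'2, hb'3⟩ := strong_duality B a hanonneg f v hvB hvmin
  have hdual : lgEnergy a v ≤ ∑ i ∈ B, dvg b i * f i :=
    le_trans hb'3 (hbmax b' hb'1 hb'2)
  have h1 : ∑ i ∈ B, dvg b i * f i = ∑ i ∈ B, dvg b i * v i :=
    Finset.sum_congr rfl fun i hi => by rw [hvB i hi]
  have h2 : ∑ i ∈ B, dvg b i * v i = ∑ i, dvg b i * v i := by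
    refine Finset.sum_subset B.subset_univ ?_
    intro i _ hi
    rw [hb2 i hi, zero_mul]
  have h3 : ∑ i, dvg b i * v i = ∑ i, ∑ j, b i j * (v j - v i) := dvg_pairing b v
  have hterm : ∀ i j, b i j * (v j - v i) ≤ a i j / 2 * |v i - v j| := by
    intro i j
    calc b i j * (v j - v i) ≤ |b i j * (v j - v i)| := le_abs_self _
      _ = |b i j| * |v i - v j| := by rw [abs_mul, abs_sub_comm]
      _ ≤ a i j / 2 * |v i - v j| := mul_le_mul_of_nonneg_right (hb1 i j) (abs_nonneg _)
  set T : Fin n → Fin n → ℝ := fun i j => a i j / 2 * |v i - v j| - b i j * (v j - v i) with hT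
  have hTnn : ∀ i j, 0 ≤ T i j := by
    intro i j
    have := hterm i j
    simp only [hT]
    linarith
  have hsumT : ∑ i, ∑ j, T i j = lgEnergy a v - ∑ i ∈ B, dvg b i * f i := by
    rw [h1, h2, h3]
    unfold lgEnergy
    rw [Finset.mul_sum, ← Finset.sum_sub_distrib]
    refine Finset.sum_congr rfl fun i _ => ?_
    rw [Finset.mul_sum, ← Finset.sum_sub_distrib]
    refine Finset.sum_congr rfl fun j _ => ?_
    show a i j / 2 * |v i - v j| - b i j * (v j - v i)
        = 1 / 2 * (a i j * |v i - v j|) - b i j * (v j - v i)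
    ring
  have hsum0 : ∑ i, ∑ j, T i j = 0 := by
    refine le_antisymm (by rw [hsumT]; linarith) ?_
    exact Finset.sum_nonneg fun i _ => Finset.sum_nonneg fun j _ => hTnn i j
  have hT0 : ∀ i j, T i j = 0 := by
    intro i j
    have houter := (Finset.sum_eq_zero_iff_of_nonneg
      (fun i _ => Finset.sum_nonneg fun j _ => hTnn i j)).1 hsum0
    have hinner := (Finset.sum_eq_zero_iff_of_nonneg
      (fun j _ => hTnn i j)).1 (houter i (Finset.mem_univ i))
    exact hinner j (Finset.mem_univ j)
  intro i j
  have heq : b i j * (v j - v i) = a i j / 2 * |v i - v j| := by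
    have := hT0 i j
    simp only [hT] at this
    linarith
  constructor
  · intro hne
    have habs : 0 < |v i - v j| := abs_pos.2 (sub_ne_zero_of_ne hne)
    have hge : a i j / 2 * |v i - v j| ≤ |b i j| * |v i - v j| := by
      calc a i j / 2 * |v i - v j| = b i j * (v j - v i) := heq.symm
        _ ≤ |b i j * (v j - v i)| := le_abs_self _
        _ = |b i j| * |v i - v j| := by rw [abs_mul, abs_sub_comm]
    exact le_antisymm (hb1 i j) (le_of_mul_le_mul_right hge habs)
  · have hrw : b i j * (v i - v j) = -(a i j / 2 * |v i - v j|) := by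
      rw [← heq]; ring
    rw [hrw]
    have : 0 ≤ a i j / 2 * |v i - v j| :=
      mul_nonneg (by linarith [hanonneg i j]) (abs_nonneg _)
    linarith
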